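/- For every α ∈ (1, 3/2), every η ∈ (0, 1), and every integer L ≥ 1 there exist Borel probability measures ν₀ and ν₁ supported on the interval [η, 1] such that (i) ∫ t^l dν₁(t) = ∫ t^l dν₀(t) for every integer l with 0 ≤ l ≤ L, and (ii) ∫ t^{α−1} dν₁(t) − ∫ t^{α−1} dν₀(t) = 2·E_L[x^{α−1}]_{[η,1]}. -/

import Mathlib

open scoped BigOperators

/-- Best uniform polynomial approximation error of `f` on `[a, b]` by real polynomials
of degree at most `L`. -/
noncomputable def approxErr (f : ℝ → ℝ) (L : ℕ) (a b : ℝ) : ℝ :=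
  ⨅ p : {p : Polynomial ℝ // p.natDegree ≤ L},
    ⨆ x : Set.Icc a b, |f (x : ℝ) - (p : Polynomial ℝ).eval (x : ℝ)|

open MeasureTheory

/-!
This is the duality between best uniform approximation and moment matching. Put
`F t = (1, t, …, t^L, f t)` and `E = E_L[f]`. The point `(0, E)` lies in the convex hull of
`±F([a, b])`: otherwise a linear functional `g` separates it from this compact convex set, and
writing `g (F t) = q t + β f t` with `β > 0` shows that `-q / β` approximates `f` within
`sup |g ∘ F| / β < E`. Since the first coordinate of `±F` is `±1`, the point is half the
difference `u - v` of two points of the convex hull of `F([a, b])`, that is, of the moment vectors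
of two finitely supported probability measures on `[a, b]`.
-/

open Set Polynomial

theorem IsCompact.isCompact_convexHull {V : Type*} [NormedAddCommGroup V] [NormedSpace ℝ V]
    [FiniteDimensional ℝ V] {s : Set V} (hs : IsCompact s) : IsCompact (convexHull ℝ s) := by
  rcases s.eq_empty_or_nonempty with rfl | ⟨x₀, hx₀⟩
  · simp
  set n := Module.finrank ℝ V + 1
  suffices (fun p : (Fin n → ℝ) × (Fin n → V) ↦ ∑ i, p.1 i • p.2 i) ''
      (stdSimplex ℝ (Fin n) ×ˢ univ.pi fun _ ↦ s) = convexHull ℝ s by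
    rw [← this]
    exact ((isCompact_stdSimplex _ _).prod (isCompact_univ_pi fun _ ↦ hs)).image (by fun_prop)
  refine Subset.antisymm ?_ fun x hx ↦ ?_
  · rintro _ ⟨⟨w, z⟩, ⟨hw, hz⟩, rfl⟩
    exact (convex_convexHull ℝ s).sum_mem (fun i _ ↦ hw.1 i) hw.2
      fun i _ ↦ subset_convexHull ℝ s (hz i trivial)
  -- Carathéodory: `x` is a convex combination of at most `n` points of `s`, padded to `n`.
  obtain ⟨ι, _, z, w, hzs, hz, hw0, hw1, rfl⟩ := eq_pos_convex_span_of_mem_convexHull hx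
  obtain ⟨e⟩ : Nonempty (ι ↪ Fin n) := Function.Embedding.nonempty_of_card_le <|
    hz.card_le_finrank_succ.trans <| by
      simpa [n] using Submodule.finrank_le (vectorSpan ℝ (range z))
  set w' := Function.extend e w 0
  set z' := Function.extend e z fun _ ↦ x₀
  have hw'e (i : ι) : w' (e i) = w i := e.injective.extend_apply _ _ _
  have hz'e (i : ι) : z' (e i) = z i := e.injective.extend_apply _ _ _
  have hw' (j : Fin n) (hj : j ∉ range e) : w' j = 0 := Function.extend_apply' _ _ _ hj
  have hz' (j : Fin n) (hj : j ∉ range e) : z' j = x₀ := Function.extend_apply' _ _ _ hj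
  refine ⟨(w', z'), ⟨⟨fun j ↦ ?_, ?_⟩, fun j _ ↦ ?_⟩, ?_⟩
  · by_cases hj : j ∈ range e
    · obtain ⟨i, rfl⟩ := hj
      simpa [hw'e] using (hw0 i).le
    · exact (hw' j hj).ge
  · rw [← hw1]
    exact (Fintype.sum_of_injective e e.injective w w' hw' fun i ↦ (hw'e i).symm).symm
  · by_cases hj : j ∈ range e
    · obtain ⟨i, rfl⟩ := hj
      simpa [hz'e] using hzs (mem_range_self i)
    · simpa [hz' j hj] using hx₀
  · exact (Fintype.sum_of_injective e e.injective _ (fun j ↦ w' j • z' j)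
      (fun j hj ↦ by simp [hw' j hj]) fun i ↦ by simp [hw'e, hz'e]).symm

theorem exists_sub_eq_two_smul_of_mem_convexHull_union_neg {V : Type*} [AddCommGroup V]
    [Module ℝ V] {s : Set V} {φ : V →ₗ[ℝ] ℝ} (hs : ∀ v ∈ s, φ v = 1) {x : V}
    (hx : x ∈ convexHull ℝ (s ∪ -s)) (hφx : φ x = 0) :
    ∃ u ∈ convexHull ℝ s, ∃ v ∈ convexHull ℝ s, u - v = (2 : ℝ) • x := by
  rcases s.eq_empty_or_nonempty with rfl | hne
  · simp at hx
  rw [convexHull_union hne hne.neg, convexHull_neg, mem_convexJoin] at hx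
  obtain ⟨u, hu, v, hv, θ, θ', -, -, hθθ', rfl⟩ := hx
  have hφ : ∀ w ∈ convexHull ℝ s, φ w = 1 :=
    fun w hw ↦ convexHull_min hs (convex_hyperplane φ.isLinear 1) hw
  have hφv : φ v = -1 := by linarith [map_neg φ v ▸ hφ _ hv]
  have hθ : θ = θ' := by
    simp only [map_add, map_smul, hφ u hu, hφv, smul_eq_mul] at hφx
    linarith
  refine ⟨u, hu, -v, hv, ?_⟩
  rw [sub_neg_eq_add, smul_add, smul_smul, smul_smul, ← hθ, show (2 : ℝ) * θ = 1 by linarith]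
  simp

theorem exists_isProbabilityMeasure_of_mem_convexHull_image {X V : Type*} [MeasurableSpace X]
    [MeasurableSingletonClass X] [AddCommGroup V] [Module ℝ V] {F : X → V} {K : Set X} {y : V}
    (hy : y ∈ convexHull ℝ (F '' K)) :
    ∃ μ : Measure X, IsProbabilityMeasure μ ∧ μ Kᶜ = 0 ∧
      ∀ φ : V →ₗ[ℝ] ℝ, ∫ x, φ (F x) ∂μ = φ y := by
  obtain ⟨_, x, -, -⟩ := convexHull_nonempty_iff.1 ⟨y, hy⟩
  have : Nonempty X := ⟨x⟩
  rw [convexHull_eq] at hy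
  obtain ⟨ι, T, w, z, hw0, hw1, hz, rfl⟩ := hy
  choose! p hpK hpz using hz
  refine ⟨∑ i ∈ T, ENNReal.ofReal (w i) • Measure.dirac (p i), ⟨?_⟩, ?_, fun φ ↦ ?_⟩
  · simp [Measure.finsetSum_apply, ← ENNReal.ofReal_sum_of_nonneg hw0, hw1]
  · simpa [Measure.finsetSum_apply, Measure.dirac_apply] using fun i hi ↦ Or.inr (hpK i hi)
  · rw [integral_finsetSum_measure fun i _ ↦
      (integrable_dirac (f := fun x ↦ φ (F x)) enorm_lt_top).smul_measure ENNReal.ofReal_ne_top,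
      Finset.centerMass_eq_of_sum_1 _ _ hw1, map_sum]
    refine Finset.sum_congr rfl fun i hi ↦ ?_
    rw [integral_smul_measure, integral_dirac, ENNReal.toReal_ofReal (hw0 i hi), map_smul, hpz i hi]

theorem approxErr_nonneg (f : ℝ → ℝ) (L : ℕ) (a b : ℝ) : 0 ≤ approxErr f L a b :=
  haveI : Nonempty {p : ℝ[X] // p.natDegree ≤ L} := ⟨⟨0, by simp⟩⟩
  le_ciInf fun _ ↦ Real.iSup_nonneg fun _ ↦ abs_nonneg _

theorem approxErr_le {f : ℝ → ℝ} {L : ℕ} {a b c : ℝ} (hab : a ≤ b) {p : ℝ[X]}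
    (hp : p.natDegree ≤ L) (h : ∀ x ∈ Icc a b, |f x - p.eval x| ≤ c) : approxErr f L a b ≤ c :=
  haveI : Nonempty (Icc a b) := ⟨⟨a, left_mem_Icc.2 hab⟩⟩
  (ciInf_le ⟨0, by rintro _ ⟨q, rfl⟩; exact Real.iSup_nonneg fun _ ↦ abs_nonneg _⟩ ⟨p, hp⟩).trans
    (ciSup_le fun x ↦ h x x.2)

def momentCurve (f : ℝ → ℝ) (L : ℕ) (t : ℝ) : (Fin (L + 1) → ℝ) × ℝ :=
  (fun l ↦ t ^ (l : ℕ), f t)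

theorem exists_polynomial_apply_momentCurve (f : ℝ → ℝ) {L : ℕ}
    (g : ((Fin (L + 1) → ℝ) × ℝ) →ₗ[ℝ] ℝ) :
    ∃ q : ℝ[X], q.natDegree ≤ L ∧ ∀ t, g (momentCurve f L t) = q.eval t + g (0, 1) * f t := by
  set e : Fin (L + 1) → Fin (L + 1) → ℝ := fun l j ↦ if l = j then 1 else 0
  refine ⟨∑ l : Fin (L + 1), C (g (e l, 0)) * X ^ (l : ℕ),
    natDegree_sum_le_of_forall_le _ _ fun l _ ↦
      (natDegree_C_mul_X_pow_le _ _).trans (Nat.lt_succ_iff.mp l.isLt), fun t ↦ ?_⟩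
  have hsplit :
      momentCurve f L t = (fun l : Fin (L + 1) ↦ t ^ (l : ℕ), (0 : ℝ)) + f t • (0, 1) := by
    simp [momentCurve]
  have hinl := LinearMap.pi_apply_eq_sum_univ (g ∘ₗ LinearMap.inl ℝ _ ℝ) fun l ↦ t ^ (l : ℕ)
  simp only [LinearMap.comp_apply, LinearMap.inl_apply] at hinl
  rw [hsplit, map_add, map_smul, hinl, eval_finsetSum]
  simp only [e, eval_mul, eval_C, eval_pow, eval_X, smul_eq_mul, mul_comm]

theorem mem_convexHull_momentCurve {f : ℝ → ℝ} {a b : ℝ} (hab : a ≤ b)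
    (hf : ContinuousOn f (Icc a b)) (L : ℕ) :
    ((0 : Fin (L + 1) → ℝ), approxErr f L a b) ∈
      convexHull ℝ (momentCurve f L '' Icc a b ∪ -(momentCurve f L '' Icc a b)) := by
  set S := momentCurve f L '' Icc a b
  set E := approxErr f L a b
  have hS : IsCompact S :=
    isCompact_Icc.image_of_continuousOn (by unfold momentCurve; fun_prop)
  have hpos : ∀ t ∈ Icc a b, momentCurve f L t ∈ convexHull ℝ (S ∪ -S) :=
    fun t ht ↦ subset_convexHull ℝ _ (Or.inl (mem_image_of_mem _ ht))
  have hneg : ∀ t ∈ Icc a b, -momentCurve f L t ∈ convexHull ℝ (S ∪ -S) :=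
    fun t ht ↦ subset_convexHull ℝ _ <| Or.inr <| by
      rw [mem_neg, neg_neg]
      exact mem_image_of_mem _ ht
  by_contra hE
  obtain ⟨g, c, hgc, hcE⟩ := geometric_hahn_banach_closed_point (convex_convexHull ℝ _)
    (hS.union hS.neg).isCompact_convexHull.isClosed hE
  have hc : 0 < c := by
    have ha : a ∈ Icc a b := left_mem_Icc.2 hab
    have h0 : (0 : (Fin (L + 1) → ℝ) × ℝ) ∈ convexHull ℝ (S ∪ -S) := by
      simpa using convex_convexHull ℝ _ (hpos a ha) (hneg a ha) one_half_pos.le one_half_pos.le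
        (add_halves 1)
    simpa using hgc 0 h0
  obtain ⟨q, hq, hgq⟩ := exists_polynomial_apply_momentCurve f g.toLinearMap
  simp only [ContinuousLinearMap.coe_coe] at hgq
  set β := g (0, 1)
  have hgE : g (0, E) = E * β := by simpa using g.map_smul E (0, 1)
  have hβ : 0 < β := pos_of_mul_pos_right (hgE ▸ hc.trans hcE) (approxErr_nonneg f L a b)
  have hEc : E ≤ c / β := by
    refine approxErr_le hab (p := C (-β⁻¹) * q) (natDegree_C_mul_le _ _ |>.trans hq) fun t ht ↦ ?_
    have hgt : |g (momentCurve f L t)| ≤ c :=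
      abs_le.2 ⟨by linarith [map_neg g _ ▸ hgc _ (hneg t ht)], (hgc _ (hpos t ht)).le⟩
    have : f t - (C (-β⁻¹) * q).eval t = g (momentCurve f L t) / β := by
      rw [hgq, eval_mul, eval_C]
      field_simp
      ring
    rw [this, abs_div, abs_of_pos hβ]
    exact div_le_div_of_nonneg_right hgt hβ.le
  rw [le_div_iff₀ hβ] at hEc
  linarith

theorem exists_probabilityMeasures_moments_eq_integral_sub_eq_two_mul_approxErr
    {f : ℝ → ℝ} {a b : ℝ} (hab : a ≤ b) (hf : ContinuousOn f (Icc a b)) (L : ℕ) :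
    ∃ ν₀ ν₁ : Measure ℝ, IsProbabilityMeasure ν₀ ∧ IsProbabilityMeasure ν₁ ∧
      ν₀ (Icc a b)ᶜ = 0 ∧ ν₁ (Icc a b)ᶜ = 0 ∧
      (∀ l ≤ L, ∫ t, t ^ l ∂ν₁ = ∫ t, t ^ l ∂ν₀) ∧
      ∫ t, f t ∂ν₁ - ∫ t, f t ∂ν₀ = 2 * approxErr f L a b := by
  obtain ⟨u, hu, v, hv, huv⟩ := exists_sub_eq_two_smul_of_mem_convexHull_union_neg
    (φ := LinearMap.proj 0 ∘ₗ LinearMap.fst ℝ _ ℝ) (by rintro _ ⟨t, -, rfl⟩; simp [momentCurve])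
    (mem_convexHull_momentCurve hab hf L) rfl
  obtain ⟨ν₁, h₁, hK₁, hint₁⟩ := exists_isProbabilityMeasure_of_mem_convexHull_image hu
  obtain ⟨ν₀, h₀, hK₀, hint₀⟩ := exists_isProbabilityMeasure_of_mem_convexHull_image hv
  refine ⟨ν₀, ν₁, h₀, h₁, hK₀, hK₁, fun l hl ↦ ?_, ?_⟩
  · have hl : l < L + 1 := Nat.lt_succ_of_le hl
    have h₁l : ∫ t, t ^ l ∂ν₁ = u.1 ⟨l, hl⟩ :=
      hint₁ (LinearMap.proj ⟨l, hl⟩ ∘ₗ LinearMap.fst ℝ _ ℝ)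
    have h₀l : ∫ t, t ^ l ∂ν₀ = v.1 ⟨l, hl⟩ :=
      hint₀ (LinearMap.proj ⟨l, hl⟩ ∘ₗ LinearMap.fst ℝ _ ℝ)
    have huvl : u.1 ⟨l, hl⟩ - v.1 ⟨l, hl⟩ = 0 := by
      simpa using congrFun (congrArg Prod.fst huv) ⟨l, hl⟩
    rw [h₁l, h₀l, ← sub_eq_zero, huvl]
  · have h₁f : ∫ t, f t ∂ν₁ = u.2 := hint₁ (LinearMap.snd ℝ _ ℝ)
    have h₀f : ∫ t, f t ∂ν₀ = v.2 := hint₀ (LinearMap.snd ℝ _ ℝ)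
    rw [h₁f, h₀f, ← Prod.snd_sub, huv, Prod.smul_snd, smul_eq_mul]

theorem exists_matching_priors_xalpha_shifted_general (α : ℝ)
    (η : ℝ) (hη0 : 0 < η) (hη1 : η < 1) (L : ℕ) :
    ∃ ν₀ ν₁ : Measure ℝ,
      IsProbabilityMeasure ν₀ ∧ IsProbabilityMeasure ν₁ ∧
      ν₀ ((Set.Icc η 1)ᶜ) = 0 ∧ ν₁ ((Set.Icc η 1)ᶜ) = 0 ∧
      (∀ l : ℕ, l ≤ L → (∫ t, t ^ l ∂ν₁) = ∫ t, t ^ l ∂ν₀) ∧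
      (∫ t, t ^ (α - 1) ∂ν₁) - (∫ t, t ^ (α - 1) ∂ν₀)
        = 2 * approxErr (fun x => x ^ (α - 1)) L η 1 :=
  exists_probabilityMeasures_moments_eq_integral_sub_eq_two_mul_approxErr hη1.le
    (continuousOn_id.rpow_const fun _ hx ↦ Or.inl (hη0.trans_le hx.1).ne') L

theorem exists_matching_priors_xalpha_shifted (α : ℝ) (hα1 : 1 < α) (hα2 : α < 3 / 2)
    (η : ℝ) (hη0 : 0 < η) (hη1 : η < 1) (L : ℕ) (hL : 1 ≤ L) :
    ∃ ν₀ ν₁ : Measure ℝ,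
      IsProbabilityMeasure ν₀ ∧ IsProbabilityMeasure ν₁ ∧
      ν₀ ((Set.Icc η 1)ᶜ) = 0 ∧ ν₁ ((Set.Icc η 1)ᶜ) = 0 ∧
      (∀ l : ℕ, l ≤ L → (∫ t, t ^ l ∂ν₁) = ∫ t, t ^ l ∂ν₀) ∧
      (∫ t, t ^ (α - 1) ∂ν₁) - (∫ t, t ^ (α - 1) ∂ν₀)
        = 2 * approxErr (fun x => x ^ (α - 1)) L η 1 :=
  exists_matching_priors_xalpha_shifted_general α η hη0 hη1 L
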